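/- arXiv:1407.3630 — 6 statements merged into one kernel-verified Lean document; each statement's English description precedes it below -/
import Mathlib

section
/- For every integer m ≥ 1 there exists an integer a with 1 ≤ a ≤ 2^m, gcd(a, 2^m) = 1, such that all partial quotients in the continued fraction expansion of a/2^m are at most 3. -/
/-!
Niederreiter's folding argument. If `q = cfDen (2 :: R)` is the continuant of a string `2, R`
and `R'` is `R` reversed, then the foldings `R', 3, 1, R` and `R', 2, 1, 1, 1, R` have
continuants `q²` and `2q²`. Taking `R = M, 2`, the folded strings again begin and end with `2`,
so from the strings `2, M, 2` with continuants `2³, 2⁴, 2¹⁰, 2¹¹` one reaches `2ᵐ` for every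
`m ≥ 3` except `m = 5`. For such a string `l`, the fraction `[0; l] = a / 2ᵐ` is in lowest terms
and has the entries of `l` as its partial quotients.
-/

open scoped Matrix

namespace Zaremba

/-- The first column of `cfMatrix [c₁, …, c_k] = ∏ [[cᵢ, 1], [1, 0]]` is `(cfDen, cfNum)`,
where `[0; c₁, …, c_k] = cfNum / cfDen`. -/
def cfMatrix (l : List ℕ) : Matrix (Fin 2) (Fin 2) ℕ := (l.map fun c => !![c, 1; 1, 0]).prod

def cfNum (l : List ℕ) : ℕ := cfMatrix l 1 0

def cfDen (l : List ℕ) : ℕ := cfMatrix l 0 0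

@[simp] lemma cfMatrix_nil : cfMatrix [] = 1 := rfl

@[simp] lemma cfMatrix_cons (c : ℕ) (l : List ℕ) :
    cfMatrix (c :: l) = !![c, 1; 1, 0] * cfMatrix l := by
  simp [cfMatrix]

lemma cfMatrix_append (l₁ l₂ : List ℕ) : cfMatrix (l₁ ++ l₂) = cfMatrix l₁ * cfMatrix l₂ := by
  simp [cfMatrix]

lemma cfMatrix_reverse (l : List ℕ) : cfMatrix l.reverse = (cfMatrix l)ᵀ := by
  induction l with
  | nil => simp
  | cons c l ih =>
    rw [List.reverse_cons, cfMatrix_append, ih, cfMatrix_cons, cfMatrix_cons, cfMatrix_nil,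
      mul_one, Matrix.transpose_mul]
    congr 1
    ext i j
    fin_cases i <;> fin_cases j <;> rfl

@[simp] lemma cfNum_nil : cfNum [] = 0 := rfl

@[simp] lemma cfDen_nil : cfDen [] = 1 := rfl

@[simp] lemma cfNum_cons (c : ℕ) (l : List ℕ) : cfNum (c :: l) = cfDen l := by
  simp [cfNum, cfDen, Matrix.mul_apply, Fin.sum_univ_two]

@[simp] lemma cfDen_cons (c : ℕ) (l : List ℕ) : cfDen (c :: l) = c * cfDen l + cfNum l := by
  simp [cfNum, cfDen, Matrix.mul_apply, Fin.sum_univ_two]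

lemma cfDen_pos {l : List ℕ} (hl : ∀ c ∈ l, 1 ≤ c) : 0 < cfDen l := by
  induction l with
  | nil => simp
  | cons c l ih =>
    simp only [List.mem_cons, forall_eq_or_imp] at hl
    have hden := ih hl.2
    simp only [cfDen_cons]
    nlinarith [hl.1]

lemma cfNum_pos {l : List ℕ} (hl : ∀ c ∈ l, 1 ≤ c) (hne : l ≠ []) : 0 < cfNum l := by
  obtain ⟨c, l, rfl⟩ := List.exists_cons_of_ne_nil hne
  rw [cfNum_cons]
  exact cfDen_pos fun d hd => hl d (List.mem_cons_of_mem c hd)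

lemma cfNum_lt_cfDen {l : List ℕ} (hl : ∀ c ∈ l, 1 ≤ c) (hlast : l.getLast? ≠ some 1) :
    cfNum l < cfDen l := by
  match l, hl, hlast with
  | [], _, _ => simp
  | [c], hl, hlast =>
    have hc₁ : c ≠ 1 := by simpa using hlast
    have hc : 1 ≤ c := hl c (by simp)
    simp only [cfNum_cons, cfDen_cons, cfDen_nil, cfNum_nil]
    omega
  | c :: d :: l, hl, _ =>
    have hc : 1 ≤ c := hl c (by simp)
    have hpos := cfNum_pos (l := d :: l) (fun e he => hl e (List.mem_cons_of_mem c he)) (by simp)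
    rw [cfNum_cons, cfDen_cons c]
    nlinarith

lemma coprime_cfNum_cfDen (l : List ℕ) : (cfNum l).Coprime (cfDen l) := by
  induction l with
  | nil => simp
  | cons c l ih =>
    rw [cfNum_cons, cfDen_cons, Nat.Coprime, add_comm, mul_comm, Nat.gcd_add_mul_left_right]
    exact ih.symm

def cfValue (l : List ℕ) : ℚ := cfNum l / cfDen l

lemma cfValue_mem_Ico {l : List ℕ} (hl : ∀ c ∈ l, 1 ≤ c) (hlast : l.getLast? ≠ some 1) :
    cfValue l ∈ Set.Ico 0 1 := by
  have hden : (0 : ℚ) < cfDen l := by exact_mod_cast cfDen_pos hl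
  refine ⟨by unfold cfValue; positivity, ?_⟩
  rw [cfValue, div_lt_one hden]
  exact_mod_cast cfNum_lt_cfDen hl hlast

lemma cfValue_cons {c : ℕ} {l : List ℕ} (hl : ∀ d ∈ l, 1 ≤ d) :
    cfValue (c :: l) = (c + cfValue l)⁻¹ := by
  have hden : (cfDen l : ℚ) ≠ 0 := by exact_mod_cast (cfDen_pos hl).ne'
  rw [cfValue, cfValue, cfNum_cons, cfDen_cons]
  push_cast
  field_simp

/-- `c_k ≠ 1` excludes the non-canonical expansion `[…, c_{k-1}, 1] = […, c_{k-1} + 1]`. -/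
lemma of_s_get?_of_fract_eq_cfValue {l : List ℕ} (hl : ∀ c ∈ l, 1 ≤ c)
    (hlast : l.getLast? ≠ some 1) {x : ℚ} (hx : Int.fract x = cfValue l) (n : ℕ) :
    (GenContFract.of x).s.get? n = l[n]?.map fun c => ⟨1, c⟩ := by
  induction l generalizing x n with
  | nil =>
    rw [← Int.floor_add_fract x, hx, cfValue, cfNum_nil, Nat.cast_zero, zero_div, add_zero,
      GenContFract.of_s_of_int]
    simp
  | cons c l ih =>
    simp only [List.mem_cons, forall_eq_or_imp] at hl
    have hlast' : l.getLast? ≠ some 1 := by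
      cases l with
      | nil => simp
      | cons d l => simpa using hlast
    have hIco := cfValue_mem_Ico hl.2 hlast'
    have hinv : (Int.fract x)⁻¹ = c + cfValue l := by rw [hx, cfValue_cons hl.2, inv_inv]
    cases n with
    | zero =>
      have hx0 : Int.fract x ≠ 0 := by
        intro h0
        rw [h0, inv_zero] at hinv
        linarith [hIco.1, (Nat.one_le_cast (α := ℚ)).mpr hl.1]
      have hfloor : ⌊(c : ℚ) + cfValue l⌋ = c := by
        rw [add_comm, Int.floor_add_natCast, Int.floor_eq_zero_iff.mpr hIco, zero_add]
      change (GenContFract.of x).s.head = _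
      rw [GenContFract.of_s_head hx0, hinv, hfloor]
      simp
    | succ n =>
      rw [GenContFract.of_s_succ, hinv]
      refine ih hl.2 hlast' ?_ n
      rw [add_comm, Int.fract_add_natCast, Int.fract_eq_self.mpr hIco]

lemma of_cfValue_partDens_get? {l : List ℕ} (hl : ∀ c ∈ l, 1 ≤ c) (hlast : l.getLast? ≠ some 1)
    (n : ℕ) : (GenContFract.of (cfValue l)).partDens.get? n = l[n]?.map (↑) := by
  have hfract := Int.fract_eq_self.mpr (cfValue_mem_Ico hl hlast)
  simp only [GenContFract.partDens, Stream'.Seq.map_get?,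
    of_s_get?_of_fract_eq_cfValue hl hlast hfract, Option.map_map]
  rfl

theorem exists_coprime_partDens_le_of_cfDen_eq {l : List ℕ} {K N : ℕ}
    (hl : ∀ c ∈ l, 1 ≤ c ∧ c ≤ K) (hne : l ≠ []) (hlast : l.getLast? ≠ some 1)
    (hN : cfDen l = N) :
    ∃ a : ℕ, 1 ≤ a ∧ a ≤ N ∧ Nat.gcd a N = 1 ∧
      ∀ (n : ℕ) (c : ℚ), (GenContFract.of ((a : ℚ) / N)).partDens.get? n = some c → c ≤ K := by
  have hl₁ : ∀ c ∈ l, 1 ≤ c := fun c hc => (hl c hc).1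
  subst hN
  refine ⟨cfNum l, cfNum_pos hl₁ hne, (cfNum_lt_cfDen hl₁ hlast).le, coprime_cfNum_cfDen l,
    fun n c hc => ?_⟩
  rw [← cfValue, of_cfValue_partDens_get? hl₁ hlast, Option.map_eq_some_iff] at hc
  obtain ⟨d, hd, rfl⟩ := hc
  exact_mod_cast (hl d (List.mem_of_getElem? hd)).2

lemma cfDen_reverse_append_append (R B : List ℕ) :
    cfDen (R.reverse ++ B ++ R) = ((cfMatrix R)ᵀ * cfMatrix B * cfMatrix R) 0 0 := by
  rw [cfDen, cfMatrix_append, cfMatrix_append, cfMatrix_reverse]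

/- `cfMatrix [3, 1] = [[4, 3], [1, 1]]` and `cfMatrix [2, 1, 1, 1] = [[8, 5], [3, 2]]` have
quadratic forms `(2q + p)²` and `2 (2q + p)²` at `(q, p) = (cfDen R, cfNum R)`. -/
lemma cfDen_fold_three_one (R : List ℕ) :
    cfDen (R.reverse ++ [3, 1] ++ R) = cfDen (2 :: R) ^ 2 := by
  rw [cfDen_reverse_append_append, cfDen_cons]
  simp [cfDen, cfNum, Matrix.mul_apply, Fin.sum_univ_two]
  ring

lemma cfDen_fold_two_one_one_one (R : List ℕ) :
    cfDen (R.reverse ++ [2, 1, 1, 1] ++ R) = 2 * cfDen (2 :: R) ^ 2 := by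
  rw [cfDen_reverse_append_append, cfDen_cons]
  simp [cfDen, cfNum, Matrix.mul_apply, Fin.sum_univ_two]
  ring

def HasFramedExpansion (m : ℕ) : Prop :=
  ∃ M : List ℕ, (∀ c ∈ M, 1 ≤ c ∧ c ≤ 3) ∧ cfDen (2 :: (M ++ [2])) = 2 ^ m

lemma HasFramedExpansion.fold {m k : ℕ} (h : HasFramedExpansion m) {B : List ℕ}
    (hB : ∀ c ∈ B, 1 ≤ c ∧ c ≤ 3)
    (hfold : ∀ R, cfDen (R.reverse ++ B ++ R) = 2 ^ k * cfDen (2 :: R) ^ 2) :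
    HasFramedExpansion (2 * m + k) := by
  obtain ⟨M, hM, hden⟩ := h
  refine ⟨M.reverse ++ B ++ M, ?_, ?_⟩
  · intro c hc
    simp only [List.mem_append, List.mem_reverse] at hc
    rcases hc with (hc | hc) | hc
    exacts [hM c hc, hB c hc, hM c hc]
  · have hframe : 2 :: (M.reverse ++ B ++ M ++ [2]) = (M ++ [2]).reverse ++ B ++ (M ++ [2]) := by
      simp
    rw [hframe, hfold, hden, ← pow_mul, ← pow_add, add_comm, mul_comm]

lemma hasFramedExpansion_of_three_le {m : ℕ} (hm : 3 ≤ m) (h5 : m ≠ 5) :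
    HasFramedExpansion m := by
  induction m using Nat.strong_induction_on with
  | _ m ih =>
    -- `m = 5` is excluded: `32` is the continuant of no string `2, M, 2` with entries in `[1, 3]`.
    obtain ⟨k, rfl | rfl⟩ := Nat.even_or_odd' m
    · by_cases hbase : k = 2 ∨ k = 5
      · rcases hbase with rfl | rfl
        exacts [⟨[3], by decide, by decide⟩, ⟨[1, 3, 1, 3, 3, 1, 1], by decide, by decide⟩]
      · simpa using (ih k (by omega) (by omega) (by omega)).fold (k := 0) (B := [3, 1])
          (by decide) (by simpa using cfDen_fold_three_one)
    · by_cases hbase : k = 1 ∨ k = 5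
      · rcases hbase with rfl | rfl
        exacts [⟨[1], by decide, by decide⟩, ⟨[1, 1, 2, 3, 3, 1, 1, 2], by decide, by decide⟩]
      · simpa using (ih k (by omega) (by omega) (by omega)).fold (k := 1) (B := [2, 1, 1, 1])
          (by decide) (by simpa using cfDen_fold_two_one_one_one)

lemma exists_cfDen_eq_two_pow {m : ℕ} (hm : 1 ≤ m) :
    ∃ l : List ℕ, (∀ c ∈ l, 1 ≤ c ∧ c ≤ 3) ∧ l ≠ [] ∧ l.getLast? ≠ some 1 ∧ cfDen l = 2 ^ m := by
  by_cases hsmall : m = 1 ∨ m = 2 ∨ m = 5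
  · rcases hsmall with rfl | rfl | rfl
    exacts [⟨[2], by decide, by decide, by decide, by decide⟩,
      ⟨[1, 3], by decide, by decide, by decide, by decide⟩,
      ⟨[1, 3, 1, 1, 3], by decide, by decide, by decide, by decide⟩]
  · obtain ⟨M, hM, hden⟩ := hasFramedExpansion_of_three_le (m := m) (by omega) (by omega)
    refine ⟨2 :: (M ++ [2]), ?_, List.cons_ne_nil _ _, ?_, hden⟩
    · simp only [List.mem_cons, List.mem_append, List.not_mem_nil, or_false]
      rintro c (rfl | hc | rfl)
      exacts [by norm_num, hM c hc, by norm_num]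
    · rw [← List.cons_append, List.getLast?_concat]
      decide

end Zaremba

/-- Niederreiter: Zaremba's conjecture with constant 3 for powers of 2.
For every `m ≥ 1` there is `a` with `1 ≤ a ≤ 2^m`, `gcd(a, 2^m) = 1`, such that
all partial quotients of the continued fraction expansion of `a / 2^m` are at most `3`. -/
theorem zaremba_pow_two (m : ℕ) (hm : 1 ≤ m) :
    ∃ a : ℕ, 1 ≤ a ∧ a ≤ 2 ^ m ∧ Nat.gcd a (2 ^ m) = 1 ∧
      ∀ (n : ℕ) (c : ℚ),
        (GenContFract.of ((a : ℚ) / (2 ^ m : ℚ))).partDens.get? n = some c → c ≤ 3 := by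
  obtain ⟨l, hl, hne, hlast, hden⟩ := Zaremba.exists_cfDen_eq_two_pow hm
  simpa using Zaremba.exists_coprime_partDens_le_of_cfDen_eq hl hne hlast hden
end

section
/- For every m ≥ 1 there exists an integer a with 1 ≤ a ≤ 3^m and gcd(a, 3^m) = 1 such that all partial quotients of the continued fraction expansion of a/3^m are bounded by an absolute constant (in fact by 3). -/
/-!
Let `(k, b)` be the first column of the product of the matrices `!![x, 1; 1, 0]` over the letters
of a word `w` of positive integers whose last letter is at least `2`. Then `k` and `b` are coprime
and the partial quotients of `b / k` are exactly the letters of `w`, so it suffices to find words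
over `{1, 2, 3}` ending in `2` whose continuant `k` is `3 ^ m`.

The continuant of `v ++ g ++ v.reverse` is a binary quadratic form, with coefficients read off the
matrix of `g`, in the first row of the matrix of `v`. For `g = [1, 3]` and `g = [1, 1, 2, 2]` it
equals `K ^ 2` and `3 * K ^ 2`, where `K` is the continuant of `v ++ [2]`. Hence a word
`2 :: u ++ [2]` with continuant `3 ^ j` yields such words for `3 ^ (2 * j)` and `3 ^ (2 * j + 1)`,
and explicit words for `4 ≤ j ≤ 7` give all `j ≥ 4`.
-/

namespace GenContFract

variable {K : Type*} [Field K] [LinearOrder K] [IsStrictOrderedRing K] [FloorRing K]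

theorem of_s_intCast_add (z : ℤ) (v : K) :
    (GenContFract.of ((z : K) + v)).s = (GenContFract.of v).s := by
  ext1 n
  cases n with
  | zero =>
    rcases eq_or_ne (Int.fract v) 0 with h | h
    · obtain ⟨a, rfl⟩ : ∃ a : ℤ, v = a := ⟨⌊v⌋, (eq_of_sub_eq_zero h)⟩
      rw [← Int.cast_add, of_s_of_int, of_s_of_int]
    · have h' : Int.fract ((z : K) + v) ≠ 0 := by rwa [Int.fract_intCast_add]
      change Stream'.Seq.head _ = Stream'.Seq.head _
      rw [of_s_head h, of_s_head h', Int.fract_intCast_add]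
  | succ n => rw [of_s_succ, of_s_succ, Int.fract_intCast_add]

theorem of_partDens_eq_cons {v : K} (h0 : 0 < v) (h1 : v < 1) :
    (GenContFract.of v).partDens =
      .cons (⌊v⁻¹⌋ : K) (GenContFract.of (Int.fract v⁻¹)).partDens := by
  have hfract : Int.fract v = v := Int.fract_eq_self.2 ⟨h0.le, h1⟩
  have hs : (GenContFract.of v).s = .cons ⟨1, ⌊v⁻¹⌋⟩ (GenContFract.of (Int.fract v⁻¹)).s := by
    ext1 n
    cases n with
    | zero =>
      change Stream'.Seq.head _ = _
      rw [of_s_head (by rw [hfract]; exact h0.ne'), hfract, Stream'.Seq.get?_cons_zero]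
    | succ n =>
      rw [of_s_succ, hfract, Stream'.Seq.get?_cons_succ,
        ← of_s_intCast_add ⌊v⁻¹⌋ (Int.fract v⁻¹), Int.floor_add_fract]
  rw [partDens, hs, Stream'.Seq.map_cons]
  rfl

end GenContFract

open Matrix

namespace Zaremba

def contMatrix (w : List ℕ) : Matrix (Fin 2) (Fin 2) ℕ :=
  (w.map fun x => !![x, 1; 1, 0]).prod

@[simp]
theorem contMatrix_nil : contMatrix [] = 1 := rfl

theorem contMatrix_cons (x : ℕ) (w : List ℕ) :
    contMatrix (x :: w) = !![x, 1; 1, 0] * contMatrix w := rfl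

theorem contMatrix_append (u v : List ℕ) :
    contMatrix (u ++ v) = contMatrix u * contMatrix v := by
  rw [contMatrix, List.map_append, List.prod_append]
  rfl

theorem contMatrix_reverse (w : List ℕ) : contMatrix w.reverse = (contMatrix w)ᵀ := by
  rw [contMatrix, contMatrix, transpose_list_prod, List.map_map, List.map_reverse]
  congr 3
  ext x i j : 3
  fin_cases i <;> fin_cases j <;> rfl

@[simp]
theorem contMatrix_cons_zero_zero (x : ℕ) (w : List ℕ) :
    contMatrix (x :: w) 0 0 = x * contMatrix w 0 0 + contMatrix w 1 0 := by
  simp [contMatrix_cons, mul_apply, Fin.sum_univ_two]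

@[simp]
theorem contMatrix_cons_one_zero (x : ℕ) (w : List ℕ) :
    contMatrix (x :: w) 1 0 = contMatrix w 0 0 := by
  simp [contMatrix_cons, mul_apply, Fin.sum_univ_two]

theorem coprime_contMatrix (w : List ℕ) : Nat.Coprime (contMatrix w 0 0) (contMatrix w 1 0) := by
  induction w with
  | nil => simp
  | cons x w ih =>
    rw [contMatrix_cons_zero_zero, contMatrix_cons_one_zero, Nat.coprime_mul_right_add_left]
    exact ih.symm

theorem contMatrix_zero_zero_pos {w : List ℕ} (hw : ∀ x ∈ w, 1 ≤ x) : 0 < contMatrix w 0 0 := by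
  induction w with
  | nil => simp
  | cons x w ih =>
    simp only [List.mem_cons, forall_eq_or_imp] at hw
    rw [contMatrix_cons_zero_zero]
    nlinarith [ih hw.2]

theorem contMatrix_one_zero_pos {u : List ℕ} {c : ℕ} (hu : ∀ x ∈ u, 1 ≤ x) (hc : 1 ≤ c) :
    0 < contMatrix (u ++ [c]) 1 0 := by
  cases u with
  | nil => simp
  | cons x u =>
    rw [List.cons_append, contMatrix_cons_one_zero]
    refine contMatrix_zero_zero_pos fun y hy => ?_
    rcases List.mem_append.1 hy with hy | hy
    · exact hu y (List.mem_cons_of_mem x hy)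
    · rwa [List.mem_singleton.1 hy]

theorem contMatrix_one_zero_lt {u : List ℕ} {c : ℕ} (hu : ∀ x ∈ u, 1 ≤ x) (hc : 2 ≤ c) :
    contMatrix (u ++ [c]) 1 0 < contMatrix (u ++ [c]) 0 0 := by
  cases u with
  | nil => simp; omega
  | cons x u =>
    simp only [List.mem_cons, forall_eq_or_imp] at hu
    rw [List.cons_append, contMatrix_cons_one_zero, contMatrix_cons_zero_zero]
    nlinarith [contMatrix_one_zero_pos hu.2 (by omega : 1 ≤ c)]

theorem of_partDens_contMatrix {K : Type*} [Field K] [LinearOrder K] [IsStrictOrderedRing K]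
    [FloorRing K] {u : List ℕ} {c : ℕ} (hu : ∀ x ∈ u, 1 ≤ x) (hc : 2 ≤ c) :
    (GenContFract.of ((contMatrix (u ++ [c]) 1 0 : K) / contMatrix (u ++ [c]) 0 0)).partDens =
      ((u ++ [c]).map ((↑) : ℕ → K) : Stream'.Seq K) := by
  induction u with
  | nil =>
    have hc' : (1 : K) < c := by exact_mod_cast hc
    have hpos : (0 : K) < c := by linarith
    have hinv : ((1 : K) / c)⁻¹ = ((c : ℤ) : K) := by simp
    have hnil : (GenContFract.of (0 : K)).partDens = .nil := by
      rw [GenContFract.partDens, ← Int.cast_zero, GenContFract.of_s_of_int]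
      rfl
    simp only [List.nil_append, contMatrix_cons_zero_zero, contMatrix_cons_one_zero,
      contMatrix_nil, one_apply_eq, one_apply_ne one_ne_zero, mul_one, add_zero, Nat.cast_one]
    rw [GenContFract.of_partDens_eq_cons (by positivity) ((div_lt_one hpos).2 hc'), hinv,
      Int.floor_intCast, Int.fract_intCast, hnil]
    simp
  | cons x u ih =>
    simp only [List.mem_cons, forall_eq_or_imp] at hu
    set k := contMatrix (u ++ [c]) 0 0
    set b := contMatrix (u ++ [c]) 1 0
    have hk : (0 : K) < k := by
      exact_mod_cast contMatrix_zero_zero_pos (w := u ++ [c]) (by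
        simpa [or_imp, forall_and] using ⟨hu.2, by omega⟩)
    have hb : (0 : K) < b := by exact_mod_cast contMatrix_one_zero_pos hu.2 (by omega)
    have hbk : (b : K) / k < 1 :=
      (div_lt_one hk).2 (by exact_mod_cast contMatrix_one_zero_lt hu.2 hc)
    have hx : (1 : K) ≤ x := by exact_mod_cast hu.1
    have hinv : ((k : K) / (x * k + b))⁻¹ = x + b / k := by field_simp
    have hfloor : ⌊(b : K) / k⌋ = 0 := Int.floor_eq_zero_iff.2 ⟨by positivity, hbk⟩
    have hlt : (k : K) / (x * k + b) < 1 := (div_lt_one (by positivity)).2 (by nlinarith)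
    simp only [List.cons_append, contMatrix_cons_zero_zero, contMatrix_cons_one_zero]
    push_cast
    rw [GenContFract.of_partDens_eq_cons (by positivity) hlt, hinv, Int.floor_natCast_add,
      Int.fract_natCast_add, hfloor, Int.fract_eq_self.2 ⟨by positivity, hbk⟩, ih hu.2]
    simp

theorem contMatrix_append_append_reverse_zero_zero (u g : List ℕ) :
    contMatrix (u ++ g ++ u.reverse) 0 0 =
      contMatrix g 0 0 * contMatrix u 0 0 ^ 2 +
        (contMatrix g 0 1 + contMatrix g 1 0) * contMatrix u 0 0 * contMatrix u 0 1 +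
          contMatrix g 1 1 * contMatrix u 0 1 ^ 2 := by
  rw [contMatrix_append, contMatrix_append, contMatrix_reverse]
  simp only [mul_apply, Fin.sum_univ_two, transpose_apply]
  ring

theorem contMatrix_append_two_zero_zero (u : List ℕ) :
    contMatrix (u ++ [2]) 0 0 = 2 * contMatrix u 0 0 + contMatrix u 0 1 := by
  simp [contMatrix_append, contMatrix_cons, mul_apply, Fin.sum_univ_two, mul_comm]

theorem contMatrix_append_one_three_append_reverse (u : List ℕ) :
    contMatrix (u ++ [1, 3] ++ u.reverse) 0 0 = contMatrix (u ++ [2]) 0 0 ^ 2 := by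
  obtain ⟨h00, h01, h10, h11⟩ : contMatrix [1, 3] 0 0 = 4 ∧ contMatrix [1, 3] 0 1 = 1 ∧
      contMatrix [1, 3] 1 0 = 3 ∧ contMatrix [1, 3] 1 1 = 1 := by decide
  rw [contMatrix_append_append_reverse_zero_zero, contMatrix_append_two_zero_zero,
    h00, h01, h10, h11]
  ring

theorem contMatrix_append_one_one_two_two_append_reverse (u : List ℕ) :
    contMatrix (u ++ [1, 1, 2, 2] ++ u.reverse) 0 0 = 3 * contMatrix (u ++ [2]) 0 0 ^ 2 := by
  obtain ⟨h00, h01, h10, h11⟩ : contMatrix [1, 1, 2, 2] 0 0 = 12 ∧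
      contMatrix [1, 1, 2, 2] 0 1 = 5 ∧ contMatrix [1, 1, 2, 2] 1 0 = 7 ∧
      contMatrix [1, 1, 2, 2] 1 1 = 3 := by decide
  rw [contMatrix_append_append_reverse_zero_zero, contMatrix_append_two_zero_zero,
    h00, h01, h10, h11]
  ring

-- The leading `2` becomes the last letter of `(2 :: u).reverse`, so gluing preserves the frame.
def HasFramedWord (n : ℕ) : Prop :=
  ∃ u : List ℕ, (∀ x ∈ u, x ∈ Finset.Icc 1 3) ∧ contMatrix (2 :: u ++ [2]) 0 0 = n

theorem HasFramedWord.of_append_append_reverse {n t : ℕ} {g : List ℕ}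
    (hg : ∀ x ∈ g, x ∈ Finset.Icc 1 3)
    (hform : ∀ u, contMatrix (u ++ g ++ u.reverse) 0 0 = t * contMatrix (u ++ [2]) 0 0 ^ 2)
    (hn : HasFramedWord n) : HasFramedWord (t * n ^ 2) := by
  obtain ⟨u, hu, rfl⟩ := hn
  refine ⟨u ++ g ++ u.reverse, ?_, by simpa using hform (2 :: u)⟩
  simp only [List.mem_append, List.mem_reverse]
  rintro x ((hx | hx) | hx)
  exacts [hu x hx, hg x hx, hu x hx]

theorem HasFramedWord.sq {n : ℕ} (hn : HasFramedWord n) : HasFramedWord (n ^ 2) := by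
  simpa using hn.of_append_append_reverse (g := [1, 3]) (t := 1) (by decide) fun u => by
    rw [one_mul, contMatrix_append_one_three_append_reverse]

theorem HasFramedWord.three_mul_sq {n : ℕ} (hn : HasFramedWord n) :
    HasFramedWord (3 * n ^ 2) :=
  hn.of_append_append_reverse (by decide) contMatrix_append_one_one_two_two_append_reverse

theorem hasFramedWord_three_pow {j : ℕ} (hj : 4 ≤ j) : HasFramedWord (3 ^ j) := by
  induction j using Nat.strong_induction_on with
  | _ j ih =>
    by_cases hj8 : j < 8
    · -- witnesses found by exhaustive search
      interval_cases j
      · exact ⟨[1, 1, 1, 1, 2], by decide, by decide⟩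
      · exact ⟨[1, 1, 1, 3, 1, 2], by decide, by decide⟩
      · exact ⟨[1, 1, 2, 1, 3, 1, 3], by decide, by decide⟩
      · exact ⟨[1, 1, 3, 2, 2, 2, 1, 2], by decide, by decide⟩
    · obtain ⟨i, rfl | rfl⟩ := Nat.even_or_odd' j
      · rw [pow_mul']
        exact (ih i (by omega) (by omega)).sq
      · rw [pow_succ', pow_mul']
        exact (ih i (by omega) (by omega)).three_mul_sq

theorem exists_contMatrix_append_two_eq_three_pow {m : ℕ} (hm : 1 ≤ m) :
    ∃ u : List ℕ, (∀ x ∈ u, x ∈ Finset.Icc 1 3) ∧ contMatrix (u ++ [2]) 0 0 = 3 ^ m := by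
  rcases lt_or_ge m 4 with hm4 | hm4
  · interval_cases m
    exacts [⟨[1], by decide, by decide⟩, ⟨[1, 3], by decide, by decide⟩,
      ⟨[3, 2, 1], by decide, by decide⟩]
  · obtain ⟨u, hu, hk⟩ := hasFramedWord_three_pow hm4
    exact ⟨2 :: u, List.forall_mem_cons.2 ⟨by decide, hu⟩, hk⟩

end Zaremba

open Zaremba

/-- Niederreiter: Zaremba's conjecture with constant 3 for powers of 3.
For every `m ≥ 1` there is `a` with `1 ≤ a ≤ 2^m`, `gcd(a, 2^m) = 1`, such that
all partial quotients of the continued fraction expansion of `a / 3^m` are at most `3`. -/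
theorem zaremba_pow_three (m : ℕ) (hm : 1 ≤ m) :
    ∃ a : ℕ, 1 ≤ a ∧ a ≤ 3 ^ m ∧ Nat.gcd a (3 ^ m) = 1 ∧
      ∀ (n : ℕ) (c : ℚ),
        (GenContFract.of ((a : ℚ) / (3 ^ m : ℚ))).partDens.get? n = some c → c ≤ 3 := by
  obtain ⟨u, hu, hk⟩ := exists_contMatrix_append_two_eq_three_pow hm
  have hu1 : ∀ x ∈ u, 1 ≤ x := fun x hx => (Finset.mem_Icc.1 (hu x hx)).1
  refine ⟨contMatrix (u ++ [2]) 1 0, contMatrix_one_zero_pos hu1 one_le_two,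
    hk ▸ (contMatrix_one_zero_lt hu1 le_rfl).le, hk ▸ (coprime_contMatrix _).symm, ?_⟩
  intro n c hc
  have hcast : (3 : ℚ) ^ m = (contMatrix (u ++ [2]) 0 0 : ℚ) := by exact_mod_cast hk.symm
  rw [hcast, of_partDens_contMatrix hu1 le_rfl, Stream'.Seq.ofList_get?] at hc
  obtain ⟨x, hx, rfl⟩ := List.mem_map.1 (List.mem_of_getElem? hc)
  rcases List.mem_append.1 hx with hx | hx
  · exact_mod_cast (Finset.mem_Icc.1 (hu x hx)).2
  · rw [List.mem_singleton.1 hx]; norm_num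
end

section
/- Let q be an odd prime power, b ∈ F_q, and f_b(X) = X^{(q+1)/2} + bX. Then f_b is a complete mapping of F_q if and only if b² − 1 and b² + 2b are both nonzero squares in F_q. -/
/-!
Write `m = (q - 1) / 2` and `χ(x) = x ^ m ∈ {0, ±1}`, so that `X ^ ((q + 1) / 2) + aX` is
`f_a(x) = x (χ(x) + a)`, and `f_b(x) + x = f_{b+1}(x)`; moreover `a ^ 2 - 1` is a nonzero square
iff `χ(a + 1) = χ(a - 1) ≠ 0`.

If `χ(a + 1) = χ(a - 1) = ε ≠ 0`, multiplicativity gives `χ(f_a(x)) = χ(x) χ(χ(x) + a) = ε χ(x)`,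
so `f_a(x)` determines `χ(x)` and then `x`. Conversely, if `f_a` is injective then `a ± 1 ≠ 0`
(compare `f_a(0)` with `f_a(1)` and with `f_a` at a nonsquare), and if `χ(a + 1) = -χ(a - 1)` then
`y = (a + 1) / (a - 1)` is a nonsquare with `f_a(y) = a + 1 = f_a(1)`.
-/

open Function

namespace FiniteField

variable {F : Type*} [Field F] [Fintype F]

theorem card_div_two_ne_zero : Fintype.card F / 2 ≠ 0 := by
  have := Fintype.one_lt_card (α := F)
  omega

theorem pow_card_div_two_sq (hF : ringChar F ≠ 2) {x : F} (hx : x ≠ 0) :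
    (x ^ (Fintype.card F / 2)) ^ 2 = 1 := by
  rcases pow_dichotomy hF hx with h | h <;> simp [h]

theorem mul_pow_card_div_two_eq_one_iff (hF : ringChar F ≠ 2) {u v : F} :
    (u * v) ^ (Fintype.card F / 2) = 1 ↔
      u ^ (Fintype.card F / 2) = v ^ (Fintype.card F / 2) ∧ v ^ (Fintype.card F / 2) ≠ 0 := by
  rw [mul_pow]
  constructor
  · intro h
    have hv : v ^ (Fintype.card F / 2) ≠ 0 := right_ne_zero_of_mul_eq_one h
    have hv2 := pow_card_div_two_sq hF (ne_zero_pow card_div_two_ne_zero hv)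
    exact ⟨by linear_combination v ^ (Fintype.card F / 2) * h -
      u ^ (Fintype.card F / 2) * hv2, hv⟩
  · rintro ⟨huv, hv⟩
    rw [huv, ← sq]
    exact pow_card_div_two_sq hF (ne_zero_pow card_div_two_ne_zero hv)

theorem exists_ne_zero_sq_eq_iff (hF : ringChar F ≠ 2) (w : F) :
    (∃ c : F, c ≠ 0 ∧ c ^ 2 = w) ↔ w ^ (Fintype.card F / 2) = 1 := by
  rcases eq_or_ne w 0 with rfl | hw
  · simp [zero_pow card_div_two_ne_zero]
  rw [← isSquare_iff hF hw]
  constructor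
  · rintro ⟨c, -, rfl⟩
    exact IsSquare.sq c
  · rintro ⟨c, rfl⟩
    exact ⟨c, fun hc => hw (by simp [hc]), sq c⟩

theorem pow_card_div_two_add_pow_card_div_two (hF : ringChar F ≠ 2) {a x : F}
    (ha : (a + 1) ^ (Fintype.card F / 2) = (a - 1) ^ (Fintype.card F / 2)) (hx : x ≠ 0) :
    (x ^ (Fintype.card F / 2) + a) ^ (Fintype.card F / 2) = (a - 1) ^ (Fintype.card F / 2) := by
  rcases pow_dichotomy hF hx with h | h <;> rw [h]
  · rw [add_comm, ha]
  · rw [neg_add_eq_sub]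

theorem injective_mul_pow_card_div_two_add (hF : ringChar F ≠ 2) {a : F}
    (ha : (a + 1) ^ (Fintype.card F / 2) = (a - 1) ^ (Fintype.card F / 2))
    (ha0 : (a - 1) ^ (Fintype.card F / 2) ≠ 0) :
    Injective fun x : F => x * (x ^ (Fintype.card F / 2) + a) := by
  have hm := card_div_two_ne_zero (F := F)
  have hχ : ∀ x : F, (x * (x ^ (Fintype.card F / 2) + a)) ^ (Fintype.card F / 2) =
      x ^ (Fintype.card F / 2) * (a - 1) ^ (Fintype.card F / 2) := by
    intro x
    rcases eq_or_ne x 0 with rfl | hx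
    · simp [zero_pow hm]
    · rw [mul_pow, pow_card_div_two_add_pow_card_div_two hF ha hx]
  intro x z hxz
  simp only at hxz
  have hχxz : x ^ (Fintype.card F / 2) = z ^ (Fintype.card F / 2) :=
    mul_right_cancel₀ ha0 (by rw [← hχ, ← hχ, hxz])
  rcases eq_or_ne x 0 with rfl | hx
  · rw [zero_pow hm, eq_comm, pow_eq_zero_iff hm] at hχxz
    exact hχxz.symm
  have hfactor : x ^ (Fintype.card F / 2) + a ≠ 0 := fun h => ha0 (by
    rw [← pow_card_div_two_add_pow_card_div_two hF ha hx, h, zero_pow hm])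
  rw [← hχxz] at hxz
  exact mul_right_cancel₀ hfactor hxz

theorem pow_card_div_two_eq_of_injective (hF : ringChar F ≠ 2) {a : F}
    (hf : Injective fun x : F => x * (x ^ (Fintype.card F / 2) + a)) :
    (a + 1) ^ (Fintype.card F / 2) = (a - 1) ^ (Fintype.card F / 2) ∧
      (a - 1) ^ (Fintype.card F / 2) ≠ 0 := by
  obtain ⟨u, hu⟩ := exists_nonsquare hF
  have hu0 : u ≠ 0 := by
    rintro rfl
    exact hu IsSquare.zero
  have hχu : u ^ (Fintype.card F / 2) = -1 :=
    (pow_dichotomy hF hu0).resolve_left fun h => hu ((isSquare_iff hF hu0).mpr h)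
  have ha1 : a + 1 ≠ 0 := fun h => one_ne_zero (@hf 1 0 (by
    simp only [one_pow, one_mul, zero_mul]
    linear_combination h))
  have ha2 : a - 1 ≠ 0 := fun h => hu0 (@hf u 0 (by
    simp only [hχu, zero_mul]
    linear_combination u * h))
  refine ⟨?_, pow_ne_zero _ ha2⟩
  have hsq : ((a + 1) ^ (Fintype.card F / 2)) ^ 2 = ((a - 1) ^ (Fintype.card F / 2)) ^ 2 := by
    rw [pow_card_div_two_sq hF ha1, pow_card_div_two_sq hF ha2]
  refine (sq_eq_sq_iff_eq_or_eq_neg.mp hsq).resolve_right fun hneg => ?_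
  have hχy : ((a + 1) / (a - 1)) ^ (Fintype.card F / 2) = -1 := by
    rw [div_pow, hneg, neg_div, div_self (pow_ne_zero _ ha2)]
  have hy1 : (a + 1) / (a - 1) = 1 := @hf _ 1 (by
    simp only [hχy, one_pow, one_mul]
    rw [neg_add_eq_sub, div_mul_cancel₀ _ ha2, add_comm])
  exact Ring.neg_one_ne_one_of_char_ne_two hF (by rw [← hχy, hy1, one_pow])

theorem injective_mul_pow_card_div_two_add_iff (hF : ringChar F ≠ 2) (a : F) :
    (Injective fun x : F => x * (x ^ (Fintype.card F / 2) + a)) ↔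
      ∃ c : F, c ≠ 0 ∧ c ^ 2 = a ^ 2 - 1 := by
  rw [exists_ne_zero_sq_eq_iff hF, show a ^ 2 - 1 = (a + 1) * (a - 1) by ring,
    mul_pow_card_div_two_eq_one_iff hF]
  exact ⟨pow_card_div_two_eq_of_injective hF, fun h => injective_mul_pow_card_div_two_add hF h.1 h.2⟩

theorem bijective_pow_card_add_one_div_two_add_mul_iff
    (hq : Odd (Fintype.card F)) (a : F) :
    (Bijective fun x : F => x ^ ((Fintype.card F + 1) / 2) + a * x) ↔
      ∃ c : F, c ≠ 0 ∧ c ^ 2 = a ^ 2 - 1 := by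
  have hF : ringChar F ≠ 2 := fun h => by
    have := even_card_of_char_two h
    rw [Nat.odd_iff] at hq
    omega
  have hexp : (Fintype.card F + 1) / 2 = Fintype.card F / 2 + 1 := by
    obtain ⟨k, hk⟩ := hq
    omega
  have hf : (fun x : F => x ^ ((Fintype.card F + 1) / 2) + a * x) =
      fun x : F => x * (x ^ (Fintype.card F / 2) + a) := by
    funext x
    rw [hexp]
    ring
  rw [hf, ← Finite.injective_iff_bijective, injective_mul_pow_card_div_two_add_iff hF]

end FiniteField

/-- Niederreiter–Robinson: for odd `q`, `f_b(X) = X^((q+1)/2) + bX` is a complete mapping of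
`F_q` if and only if `b² - 1` and `b² + 2b` are both squares of nonzero elements of `F_q`. -/
theorem complete_mapping_iff (F : Type*) [Field F] [Fintype F]
    (hq : Odd (Fintype.card F)) (b : F) :
    (Function.Bijective (fun x : F => x ^ ((Fintype.card F + 1) / 2) + b * x) ∧
      Function.Bijective (fun x : F => (x ^ ((Fintype.card F + 1) / 2) + b * x) + x)) ↔
    ((∃ c : F, c ≠ 0 ∧ c ^ 2 = b ^ 2 - 1) ∧ (∃ c : F, c ≠ 0 ∧ c ^ 2 = b ^ 2 + 2 * b)) := by
  have hshift : (fun x : F => (x ^ ((Fintype.card F + 1) / 2) + b * x) + x) =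
      fun x : F => x ^ ((Fintype.card F + 1) / 2) + (b + 1) * x := by
    funext x
    ring
  rw [hshift, FiniteField.bijective_pow_card_add_one_div_two_add_mul_iff hq,
    FiniteField.bijective_pow_card_add_one_div_two_add_mul_iff hq,
    show (b + 1) ^ 2 - 1 = b ^ 2 + 2 * b by ring]
end

section
/- Let f be a permutation of F_q such that f(X) + X is also a permutation (f is a complete mapping). Then the check-digit system Σ_{i=0}^{s-1} f^{(i)}(a_{i+1}) = c detects all twin errors: if a valid word has a_j = a_{j+1} = a and replacing both by b (for adjacent positions j, j+1) yields another valid word, then a = b. -/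
/-!
Changing the entries `a a` in the adjacent positions `j, j + 1` to `b b` changes the check sum
by `(f^[j+1] b + f^[j] b) - (f^[j+1] a + f^[j] a)`. The map `x ↦ f^[j+1] x + f^[j] x` is
`(f + id) ∘ f^[j]`, a composition of injections, so the check sum is unchanged only if `a = b`.
-/

open Function Finset

section UpdateSum

variable {ι A M : Type*} [Fintype ι] [DecidableEq ι]

theorem sum_apply_update_add [AddCommMonoid M] (φ : ι → A → M) (w : ι → A) (j : ι)
    (b : A) :
    ∑ i, φ i (update w j b i) + φ j (w j) = ∑ i, φ i (w i) + φ j b := by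
  simp_rw [apply_update φ, sum_update_of_mem (mem_univ j),
    sum_eq_add_sum_sdiff_singleton_of_mem (mem_univ j) fun i => φ i (w i)]
  abel

theorem add_eq_add_of_sum_update_update_eq [AddCancelCommMonoid M] (φ : ι → A → M)
    (w : ι → A) {j k : ι} (hjk : j ≠ k) (b : A)
    (h : ∑ i, φ i (update (update w j b) k b i) = ∑ i, φ i (w i)) :
    φ j b + φ k b = φ j (w j) + φ k (w k) := by
  have hj := sum_apply_update_add φ w j b
  have hk := sum_apply_update_add φ (update w j b) k b
  rw [h, update_of_ne hjk.symm] at hk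
  apply add_left_cancel (a := ∑ i, φ i (update w j b i))
  calc _ = ∑ i, φ i (w i) + φ k (w k) + φ j b := by rw [hk]; abel
    _ = ∑ i, φ i (update w j b i) + φ j (w j) + φ k (w k) := by rw [hj]; abel
    _ = _ := by abel

end UpdateSum

theorem Function.Injective.iterate_succ_add_iterate {α : Type*} [Add α] {f : α → α}
    (hf : Injective f) (hg : Injective fun x => f x + x) (n : ℕ) :
    Injective fun x => f^[n + 1] x + f^[n] x := by
  simp_rw [iterate_succ_apply']
  exact hg.comp (hf.iterate n)

theorem check_digit_detects_twin_errors_general (F : Type*) [Field F]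
    (f : F → F) (hf : Function.Bijective f)
    (hfc : Function.Bijective (fun x : F => f x + x))
    (c : F) (s : ℕ) (w : Fin s → F) (j k : Fin s) (hjk : (k : ℕ) = (j : ℕ) + 1)
    (α β : F) (hwj : w j = α) (hwk : w k = α)
    (hw : ∑ i : Fin s, f^[(i : ℕ)] (w i) = c)
    (hw' : ∑ i : Fin s, f^[(i : ℕ)] (Function.update (Function.update w j β) k β i) = c) :
    α = β := by
  have hne : j ≠ k := Fin.ne_of_val_ne (by omega)
  have hsum :=
    add_eq_add_of_sum_update_update_eq (fun i : Fin s => f^[i]) w hne β (hw'.trans hw.symm)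
  rw [hwj, hwk, hjk, add_comm, add_comm (f^[j] α)] at hsum
  exact (hf.injective.iterate_succ_add_iterate hfc.injective j hsum).symm

/-- If `f` is a complete mapping of `F_q` (both `f` and `x ↦ f(x) + x` are bijections), then
the check-digit system `∑_{i=0}^{s-1} f^{(i)}(a_{i+1}) = c` detects all twin errors: if a
valid word has equal entries `a` in two adjacent positions and replacing both by `b` yields
another valid word, then `a = b`. -/
theorem check_digit_detects_twin_errors (F : Type*) [Field F] [Fintype F]
    (f : F → F) (hf : Function.Bijective f)
    (hfc : Function.Bijective (fun x : F => f x + x))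
    (c : F) (s : ℕ) (w : Fin s → F) (j k : Fin s) (hjk : (k : ℕ) = (j : ℕ) + 1)
    (α β : F) (hwj : w j = α) (hwk : w k = α)
    (hw : ∑ i : Fin s, f^[(i : ℕ)] (w i) = c)
    (hw' : ∑ i : Fin s, f^[(i : ℕ)] (Function.update (Function.update w j β) k β i) = c) :
    α = β :=
  check_digit_detects_twin_errors_general F f hf hfc c s w j k hjk α β hwj hwk hw hw'
end

section
/- Let f be a permutation of F_q such that −f(X) is a complete mapping (i.e., x ↦ x − f(x) is also a bijection). Then the check-digit system Σ_{i=0}^{s-1} f^{(i)}(a_{i+1}) = c detects all neighbor transpositions: if a valid word with adjacent entries a ≠ b in positions j, j+1 remains valid after swapping them, contradiction; hence a = b. -/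
/-! Swapping the entries in positions `j` and `j + 1` changes the check sum only in those two
terms. Writing `u = f^[j] a`, `v = f^[j] b`, the sum is unchanged iff `u + f v = v + f u`,
i.e. `u - f u = v - f v`; since `x ↦ x - f x` and `f^[j]` are injective, `a = b`. -/

open Function

theorem Fintype.sum_apply_swap_sub_sum_apply {ι α M : Type*} [Fintype ι] [DecidableEq ι]
    [AddCommGroup M] (φ : ι → α → M) (w : ι → α) {j k : ι} (hjk : j ≠ k) :
    ∑ i, φ i (w (Equiv.swap j k i)) - ∑ i, φ i (w i) =
      (φ j (w k) - φ j (w j)) + (φ k (w j) - φ k (w k)) := by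
  rw [← Finset.sum_sub_distrib, Fintype.sum_eq_add j k hjk]
  · simp only [Equiv.swap_apply_left, Equiv.swap_apply_right]
  · rintro i ⟨hij, hik⟩
    rw [Equiv.swap_apply_of_ne_of_ne hij hik, sub_self]

theorem eq_of_iterate_add_iterate_succ_eq {G : Type*} [AddCommGroup G] {f : G → G}
    (hf : Injective f) (hfc : Injective fun x => x - f x) (n : ℕ) {a b : G}
    (h : f^[n] a + f^[n + 1] b = f^[n] b + f^[n + 1] a) : a = b := by
  rw [iterate_succ_apply', iterate_succ_apply'] at h
  have hsub : f^[n] a - f (f^[n] a) = f^[n] b - f (f^[n] b) :=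
    sub_eq_sub_iff_add_eq_add.mpr h
  exact hf.iterate n (hfc hsub)

theorem check_digit_detects_neighbor_transpositions_general (F : Type*) [Field F]
    (f : F → F) (hf : Function.Bijective f)
    (hfc : Function.Bijective (fun x : F => x - f x))
    (c : F) (s : ℕ) (w : Fin s → F) (j k : Fin s) (hjk : (k : ℕ) = (j : ℕ) + 1)
    (hw : ∑ i : Fin s, f^[(i : ℕ)] (w i) = c)
    (hw' : ∑ i : Fin s, f^[(i : ℕ)] (w (Equiv.swap j k i)) = c) :
    w j = w k := by
  have hne : j ≠ k := fun h => by simp [h] at hjk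
  have hdiff := Fintype.sum_apply_swap_sub_sum_apply (fun i : Fin s => f^[(i : ℕ)]) w hne
  rw [hw, hw', sub_self, hjk] at hdiff
  apply eq_of_iterate_add_iterate_succ_eq hf.injective hfc.injective j
  linear_combination hdiff

/-- If `f` is a permutation of `F_q` such that `-f` is a complete mapping (i.e. `x ↦ x - f(x)`
is also a bijection), then the check-digit system `∑_{i=0}^{s-1} f^{(i)}(a_{i+1}) = c`
detects all neighbor transpositions: if a valid word remains valid after swapping two
adjacent entries, then these entries are equal. -/
theorem check_digit_detects_neighbor_transpositions (F : Type*) [Field F] [Fintype F]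
    (f : F → F) (hf : Function.Bijective f)
    (hfc : Function.Bijective (fun x : F => x - f x))
    (c : F) (s : ℕ) (w : Fin s → F) (j k : Fin s) (hjk : (k : ℕ) = (j : ℕ) + 1)
    (hw : ∑ i : Fin s, f^[(i : ℕ)] (w i) = c)
    (hw' : ∑ i : Fin s, f^[(i : ℕ)] (w (Equiv.swap j k i)) = c) :
    w j = w k :=
  check_digit_detects_neighbor_transpositions_general F f hf hfc c s w j k hjk hw hw'
end

section
/- Let b ≥ 2 be an integer, s ≥ 1, and let C_1, ..., C_s be m×m matrices over F_b (b prime). The digital point set {x_0,...,x_{b^m−1}} they generate is a (0, m, s)-net in base b if and only if for all nonnegative integers d_1,...,d_s with d_1 + ... + d_s = m, the collection consisting of the first d_j rows of C_j for j = 1,...,s is linearly independent over F_b. -/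
open scoped Classical in
/-- A `(t,m,s)`-net in base `b`: a multiset of `b^m` points in `[0,1)^s` such that every
elementary interval `∏_j [a_j/b^{d_j}, (a_j+1)/b^{d_j})` of volume `b^{t-m}`
(i.e. with `∑_j d_j = m - t`) contains exactly `b^t` points. -/
def IsNet (b s m t : ℕ) (P : Multiset (Fin s → ℝ)) : Prop :=
  Multiset.card P = b ^ m ∧
  (∀ x ∈ P, ∀ j, 0 ≤ x j ∧ x j < 1) ∧
  ∀ d a : Fin s → ℕ, (∑ j, d j) = m - t → (∀ j, a j < b ^ d j) →
    Multiset.card (P.filter fun x => ∀ j,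
      (a j : ℝ) / (b : ℝ) ^ d j ≤ x j ∧ x j < ((a j : ℝ) + 1) / (b : ℝ) ^ d j) = b ^ t

/-- The `r`-th base-`b` digit of `n`, as an element of `F_b = ZMod b`. -/
def digitVec (b m n : ℕ) : Fin m → ZMod b := fun r => ((n / b ^ (r : ℕ)) % b : ℕ)

/-- The `n`-th point of the digital point set generated by matrices `C_1, …, C_s` over
`F_b`: its `j`-th coordinate is `∑_{r=1}^m y_{n,j,r} b^{-r}` where
`(y_{n,j,1}, …, y_{n,j,m})ᵀ = C_j · (n_0, …, n_{m-1})ᵀ`. -/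
noncomputable def digitalPoint (b m s : ℕ) (C : Fin s → Matrix (Fin m) (Fin m) (ZMod b))
    (n : ℕ) : Fin s → ℝ :=
  fun j => ∑ r : Fin m, (((C j).mulVec (digitVec b m n) r).val : ℝ) / (b : ℝ) ^ ((r : ℕ) + 1)

/-! The `j`-th coordinate of the digital point of `n` is `N / b^m`, where `N` is the number whose
base-`b` digits, most significant first, are the entries of `C_j n⃗`. It therefore lies in the
elementary interval `[a_j b^{-d_j}, (a_j+1) b^{-d_j})` exactly when the first `d_j` entries of
`C_j n⃗` are the digits of `a_j`. For fixed `d` with `∑ d_j = m` the elementary intervals thus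
correspond bijectively to the values of the linear map `F_b^m → F_b^m` given by the selected rows,
and the number of points in an interval is the size of the corresponding fibre. All fibres are
singletons iff this map is bijective, iff the selected rows are linearly independent. -/

open Finset Matrix

def horner (b : ℕ) (y : ℕ → ℕ) : ℕ → ℕ
  | 0 => 0
  | n + 1 => b * horner b y n + y n

section Horner

variable {b : ℕ} {y y' : ℕ → ℕ}

theorem horner_congr {n : ℕ} (h : ∀ i < n, y i = y' i) : horner b y n = horner b y' n := by
  induction n with
  | zero => rfl
  | succ n ih => rw [horner, horner, ih fun i hi => h i (by omega), h n (by omega)]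

theorem horner_lt {n : ℕ} (hy : ∀ i < n, y i < b) : horner b y n < b ^ n := by
  induction n with
  | zero => simp [horner]
  | succ n ih =>
    have hn := ih fun i hi => hy i (by omega)
    have hyn := hy n (by omega)
    rw [horner, pow_succ]
    nlinarith

theorem horner_succ_div {n : ℕ} (hy : y n < b) : horner b y (n + 1) / b = horner b y n := by
  rw [horner, Nat.mul_add_div (by omega), Nat.div_eq_of_lt hy, add_zero]

theorem horner_div_pow {n k : ℕ} (hy : ∀ i < n, y i < b) (hk : k ≤ n) :
    horner b y n / b ^ k = horner b y (n - k) := by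
  induction k with
  | zero => simp
  | succ k ih =>
    obtain ⟨l, hl⟩ : ∃ l, n - k = l + 1 := ⟨n - k - 1, by omega⟩
    rw [pow_succ, ← Nat.div_div_eq_div_mul, ih (by omega), hl, horner_succ_div (hy l (by omega))]
    congr 1
    omega

theorem horner_div_pow_mod {n i : ℕ} (hy : ∀ i < n, y i < b) (hi : i < n) :
    horner b y n / b ^ (n - 1 - i) % b = y i := by
  rw [horner_div_pow hy (by omega), show n - (n - 1 - i) = i + 1 by omega, horner,
    Nat.mul_add_mod, Nat.mod_eq_of_lt (hy i hi)]

theorem eq_of_horner_eq {n i : ℕ} (hy : ∀ i < n, y i < b) (hy' : ∀ i < n, y' i < b)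
    (h : horner b y n = horner b y' n) (hi : i < n) : y i = y' i := by
  rw [← horner_div_pow_mod hy hi, h, horner_div_pow_mod hy' hi]

theorem horner_digits {a n : ℕ} (ha : a < b ^ n) :
    horner b (fun i => a / b ^ (n - 1 - i) % b) n = a := by
  suffices ∀ k ≤ n, horner b (fun i => a / b ^ (n - 1 - i) % b) k = a / b ^ (n - k) by
    simpa using this n le_rfl
  intro k hk
  induction k with
  | zero => simp [horner, Nat.div_eq_of_lt ha]
  | succ k ih =>
    have hpow : b ^ (n - k) = b ^ (n - (k + 1)) * b := by rw [← pow_succ]; congr 1; omega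
    rw [horner, ih (by omega), hpow, ← Nat.div_div_eq_div_mul,
      show n - 1 - k = n - (k + 1) by omega, Nat.div_add_mod]

theorem sum_div_pow_succ_eq_horner (hb : b ≠ 0) (n : ℕ) :
    ∑ i ∈ range n, (y i : ℝ) / b ^ (i + 1) = horner b y n / b ^ n := by
  induction n with
  | zero => simp [horner]
  | succ n ih =>
    rw [sum_range_succ, ih, horner]
    push_cast
    field_simp
    ring

theorem floor_horner_div_pow_mul_pow (hb : b ≠ 0) {n d : ℕ} (hy : ∀ i < n, y i < b)
    (hd : d ≤ n) : ⌊(horner b y n : ℝ) / b ^ n * b ^ d⌋₊ = horner b y d := by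
  have hsplit :
      (horner b y n : ℝ) / b ^ n * b ^ d = (horner b y n : ℕ) / ((b ^ (n - d) : ℕ) : ℝ) := by
    rw [Nat.cast_pow, show n = n - d + d by omega, pow_add, Nat.add_sub_cancel]
    field_simp
  rw [hsplit, Nat.floor_div_eq_div, horner_div_pow hy (Nat.sub_le n d), Nat.sub_sub_self hd]

end Horner

theorem div_le_and_lt_div_iff_floor_eq {x q : ℝ} {a : ℕ} (hx : 0 ≤ x) (hq : 0 < q) :
    (a / q ≤ x ∧ x < (a + 1) / q) ↔ ⌊x * q⌋₊ = a := by
  rw [Nat.floor_eq_iff (by positivity), div_le_iff₀ hq, lt_div_iff₀ hq]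

theorem Matrix.linearIndependent_rows_iff_surjective_mulVec {K ι n : Type*} [Field K]
    [Fintype ι] [Fintype n] (M : Matrix ι n K) :
    LinearIndependent K M.row ↔ Function.Surjective M.mulVec := by
  rw [linearIndependent_iff_card_eq_finrank_span, Set.finrank, ← M.rank_eq_finrank_span_row,
    ← M.coe_mulVecLin, ← LinearMap.range_eq_top, Matrix.rank]
  constructor
  · intro h
    exact Submodule.eq_top_of_finrank_eq (by rw [Module.finrank_fintype_fun_eq_card, h])
  · intro h
    rw [h, finrank_top, Module.finrank_fintype_fun_eq_card]

theorem Function.bijective_iff_forall_card_fiber_eq_one {α β : Type*} [Fintype α]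
    [DecidableEq β] (f : α → β) : Function.Bijective f ↔ ∀ y, #{x | f x = y} = 1 := by
  simp only [Function.bijective_iff_existsUnique, Fintype.existsUnique_iff_card_one]

section Digits

variable {b m : ℕ}

theorem digitVec_injOn [NeZero b] : Set.InjOn (digitVec b m) (range (b ^ m)) := by
  intro n hn n' hn' h
  rw [coe_range, Set.mem_Iio] at hn hn'
  have key : finFunctionFinEquiv.symm (⟨n, hn⟩ : Fin (b ^ m)) =
      finFunctionFinEquiv.symm ⟨n', hn'⟩ := by
    funext r
    apply Fin.ext
    have := congrArg ZMod.val (congrFun h r)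
    simpa [digitVec, finFunctionFinEquiv_symm_apply_val, ZMod.val_natCast] using this
  simpa using congrArg Fin.val (finFunctionFinEquiv.symm.injective key)

theorem card_filter_range_digitVec [NeZero b] (Q : (Fin m → ZMod b) → Prop) [DecidablePred Q] :
    #{n ∈ range (b ^ m) | Q (digitVec b m n)} = #{v | Q v} := by
  have himage : (range (b ^ m)).image (digitVec b m) = univ :=
    eq_univ_of_card _ (by simp [card_image_of_injOn digitVec_injOn])
  rw [← card_image_of_injOn (digitVec_injOn.mono (filter_subset _ _)), ← filter_image, himage]

def digitSeq (y : Fin m → ZMod b) (r : ℕ) : ℕ := if h : r < m then (y ⟨r, h⟩).val else 0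

theorem digitSeq_lt [NeZero b] (y : Fin m → ZMod b) (r : ℕ) : digitSeq y r < b := by
  unfold digitSeq
  split
  · exact ZMod.val_lt _
  · exact NeZero.pos b

theorem digitalPoint_eq_horner {s : ℕ} (hb : b ≠ 0)
    (C : Fin s → Matrix (Fin m) (Fin m) (ZMod b)) (n : ℕ) (j : Fin s) :
    digitalPoint b m s C n j = horner b (digitSeq (C j *ᵥ digitVec b m n)) m / b ^ m := by
  rw [← sum_div_pow_succ_eq_horner hb, ← Fin.sum_univ_eq_sum_range]
  simp [digitalPoint, digitSeq]

end Digits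

section SelectedRows

variable {b m s : ℕ}

theorem le_of_sum_eq {d : Fin s → ℕ} (hd : ∑ j, d j = m) (j : Fin s) : d j ≤ m :=
  hd ▸ single_le_sum (fun _ _ => Nat.zero_le _) (mem_univ j)

abbrev SelectedRows (m : ℕ) (d : Fin s → ℕ) := {p : Fin s × Fin m // (p.2 : ℕ) < d p.1}

def selectedRows {R : Type*} (C : Fin s → Matrix (Fin m) (Fin m) R) (d : Fin s → ℕ) :
    Matrix (SelectedRows m d) (Fin m) R :=
  fun p => C p.1.1 p.1.2

theorem card_selectedRows {d : Fin s → ℕ} (hdm : ∀ j, d j ≤ m) :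
    Fintype.card (SelectedRows m d) = ∑ j, d j := by
  rw [Fintype.card_subtype, card_filter, Fintype.sum_prod_type]
  refine sum_congr rfl fun j _ => ?_
  rw [← card_filter]
  exact Fin.card_filter_val_lt.trans (min_eq_right (hdm j))

/-- The index `a_j` of the elementary interval of length `b^{-d_j}` containing the `j`-th
coordinate of a digital point whose entries in the selected rows are `w`. -/
def boxIndex (d : Fin s → ℕ) (w : SelectedRows m d → ZMod b) (j : Fin s) : ℕ :=
  horner b (digitSeq fun r : Fin m => if h : (r : ℕ) < d j then w ⟨(j, r), h⟩ else 0) (d j)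

theorem boxIndex_selectedRows_mulVec {d : Fin s → ℕ} (hdm : ∀ j, d j ≤ m)
    (C : Fin s → Matrix (Fin m) (Fin m) (ZMod b)) (v : Fin m → ZMod b) (j : Fin s) :
    boxIndex d (selectedRows C d *ᵥ v) j = horner b (digitSeq (C j *ᵥ v)) (d j) :=
  horner_congr fun r hr => by
    simp [digitSeq, hr, lt_of_lt_of_le hr (hdm j), selectedRows, mulVec]

theorem exists_boxIndex_eq {d : Fin s → ℕ} (hdm : ∀ j, d j ≤ m) {a : Fin s → ℕ}
    (ha : ∀ j, a j < b ^ d j) : ∃ w : SelectedRows m d → ZMod b, boxIndex d w = a := by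
  refine ⟨fun p => ((a p.1.1 / b ^ (d p.1.1 - 1 - p.1.2) % b : ℕ) : ZMod b),
    funext fun j => ?_⟩
  refine (horner_congr fun r hr => ?_).trans (horner_digits (ha j))
  simp [digitSeq, hr, lt_of_lt_of_le hr (hdm j), ZMod.val_natCast]

variable [NeZero b]

theorem boxIndex_lt (d : Fin s → ℕ) (w : SelectedRows m d → ZMod b) (j : Fin s) :
    boxIndex d w j < b ^ d j :=
  horner_lt fun r _ => digitSeq_lt _ r

theorem boxIndex_injective (d : Fin s → ℕ) :
    Function.Injective (boxIndex (b := b) (m := m) d) := by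
  intro w w' h
  ext ⟨⟨j, r⟩, hr⟩
  have := eq_of_horner_eq (fun i _ => digitSeq_lt _ i) (fun i _ => digitSeq_lt _ i)
    (congrFun h j) hr
  exact ZMod.val_injective b (by simpa [digitSeq, hr] using this)

end SelectedRows

section DigitalNet

variable {b m s : ℕ} [NeZero b]

theorem forall_card_boxIndex_eq_one_iff {α : Type*} [Fintype α] {d : Fin s → ℕ}
    (hdm : ∀ j, d j ≤ m) (f : α → SelectedRows m d → ZMod b) :
    (∀ a : Fin s → ℕ, (∀ j, a j < b ^ d j) → #{x | boxIndex d (f x) = a} = 1) ↔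
      ∀ w, #{x | f x = w} = 1 := by
  simp only [(boxIndex_injective d).eq_iff.symm]
  constructor
  · exact fun h w => h _ (boxIndex_lt d w)
  · intro h a ha
    obtain ⟨w, rfl⟩ := exists_boxIndex_eq hdm ha
    exact h w

variable (C : Fin s → Matrix (Fin m) (Fin m) (ZMod b))

theorem card_filter_digitalPoints_mem_box {d : Fin s → ℕ} (hdm : ∀ j, d j ≤ m)
    (a : Fin s → ℕ) :
    Multiset.card (((range (b ^ m)).val.map fun n => digitalPoint b m s C n).filter fun x =>
        ∀ j, (a j : ℝ) / (b : ℝ) ^ d j ≤ x j ∧ x j < ((a j : ℝ) + 1) / (b : ℝ) ^ d j) =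
      #{v | boxIndex d (selectedRows C d *ᵥ v) = a} := by
  rw [Multiset.filter_map, Multiset.card_map, ← filter_val, card_val,
    ← card_filter_range_digitVec]
  refine congrArg card (filter_congr fun n _ => ?_)
  simp only [Function.comp_apply, funext_iff]
  refine forall_congr' fun j => ?_
  rw [digitalPoint_eq_horner (NeZero.ne b),
    div_le_and_lt_div_iff_floor_eq (by positivity) (pow_pos (Nat.cast_pos.2 (NeZero.pos b)) _),
    floor_horner_div_pow_mul_pow (NeZero.ne b) (fun i _ => digitSeq_lt _ i) (hdm j),
    boxIndex_selectedRows_mulVec hdm]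

theorem isNet_digitalPoints_iff :
    IsNet b s m 0 ((range (b ^ m)).val.map fun n => digitalPoint b m s C n) ↔
      ∀ d : Fin s → ℕ, ∑ j, d j = m → ∀ a : Fin s → ℕ, (∀ j, a j < b ^ d j) →
        #{v | boxIndex d (selectedRows C d *ᵥ v) = a} = 1 := by
  have hunit : ∀ x ∈ (range (b ^ m)).val.map fun n => digitalPoint b m s C n,
      ∀ j, 0 ≤ x j ∧ x j < 1 := by
    simp only [Multiset.mem_map]
    rintro _ ⟨n, _, rfl⟩ j
    rw [digitalPoint_eq_horner (NeZero.ne b)]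
    exact ⟨by positivity, (div_lt_one (pow_pos (Nat.cast_pos.2 (NeZero.pos b)) _)).2
      (by exact_mod_cast horner_lt fun i _ => digitSeq_lt _ i)⟩
  rw [IsNet, and_iff_right (by simp), and_iff_right hunit, Nat.sub_zero, pow_zero]
  refine forall_congr' fun d => ⟨fun h hd a ha => ?_, fun h a hd ha => ?_⟩
  · rw [← card_filter_digitalPoints_mem_box C (le_of_sum_eq hd)]
    exact h a hd ha
  · rw [card_filter_digitalPoints_mem_box C (le_of_sum_eq hd)]
    exact h hd a ha

end DigitalNet

theorem digital_net_iff_linearIndependent_general (b m s : ℕ) (hb : b.Prime)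
    (C : Fin s → Matrix (Fin m) (Fin m) (ZMod b)) :
    IsNet b s m 0 (((Finset.range (b ^ m)).val.map fun n => digitalPoint b m s C n)) ↔
      ∀ d : Fin s → ℕ, (∑ j, d j) = m →
        LinearIndependent (ZMod b)
          (fun p : {p : Fin s × Fin m // (p.2 : ℕ) < d p.1} => C p.1.1 p.1.2) := by
  have : Fact b.Prime := ⟨hb⟩
  rw [isNet_digitalPoints_iff]
  refine forall₂_congr fun d hd => ?_
  have hdm := le_of_sum_eq hd
  have hcard : Fintype.card (Fin m → ZMod b) = Fintype.card (SelectedRows m d → ZMod b) := by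
    simp [card_selectedRows hdm, hd]
  rw [forall_card_boxIndex_eq_one_iff hdm, ← Function.bijective_iff_forall_card_fiber_eq_one,
    Fintype.bijective_iff_surjective_and_card, and_iff_left hcard,
    ← linearIndependent_rows_iff_surjective_mulVec]
  rfl

/-- Niederreiter's criterion for digital `(0,m,s)`-nets: the digital point set generated by
`m × m` matrices `C_1, …, C_s` over `F_b` (`b` prime) is a `(0,m,s)`-net in base `b` if and
only if for all `d_1 + ⋯ + d_s = m` the system consisting of the first `d_j` rows of `C_j`,
`j = 1, …, s`, is linearly independent over `F_b`. -/
theorem digital_net_iff_linearIndependent (b m s : ℕ) (hb : b.Prime) (hs : 1 ≤ s)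
    (hm : 1 ≤ m) (C : Fin s → Matrix (Fin m) (Fin m) (ZMod b)) :
    IsNet b s m 0 (((Finset.range (b ^ m)).val.map fun n => digitalPoint b m s C n)) ↔
      ∀ d : Fin s → ℕ, (∑ j, d j) = m →
        LinearIndependent (ZMod b)
          (fun p : {p : Fin s × Fin m // (p.2 : ℕ) < d p.1} => C p.1.1 p.1.2) :=
  digital_net_iff_linearIndependent_general b m s hb C
end
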